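/- arXiv:2502.08935 — 5 statements merged into one kernel-verified Lean document; each statement's English description precedes it below -/
import Mathlib

section
/- Let A₁ and A₂ be n×n real Hurwitz matrices (every eigenvalue of each, regarded as a complex matrix, has negative real part). Then for every n×n real matrix G, the Sylvester equation A₁ᵀ X + X A₂ + G = 0 admits a unique n×n real solution X. -/
/-!
If `B * X = X * C`, then `p(B) * X = X * p(C)` for every polynomial `p`. Taking `p = charpoly B`
gives `X * p(C) = 0`, and `p(C)` is invertible when `B` and `C` have disjoint spectra, because
by spectral mapping the spectrum of `p(C)` is `p(σ C)`, which avoids `0`. Hurwitz spectra make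
`σ(A₁ᵀ)` and `σ(-A₂)` disjoint (their real parts have opposite signs), so
`X ↦ A₁ᵀ X + X A₂` is injective over `ℝ`, hence bijective.
-/

open Matrix Polynomial

/-- A real square matrix is Hurwitz if every eigenvalue of it, regarded as a complex
matrix, has negative real part. -/
def IsHurwitz {k : ℕ} (M : Matrix (Fin k) (Fin k) ℝ) : Prop :=
  ∀ z ∈ spectrum ℂ (M.map (algebraMap ℝ ℂ)), z.re < 0

theorem Polynomial.aeval_mul_eq_mul_aeval {R A : Type*} [CommSemiring R] [Semiring A]
    [Algebra R A] {b c x : A} (h : b * x = x * c) (p : R[X]) :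
    aeval b p * x = x * aeval c p := by
  induction p using Polynomial.induction_on' with
  | add p q hp hq => rw [map_add, map_add, add_mul, mul_add, hp, hq]
  | monomial k a =>
    have hpow : x * c ^ k = b ^ k * x := SemiconjBy.pow_right h.symm k
    rw [aeval_monomial, aeval_monomial, mul_assoc, ← hpow, ← mul_assoc, Algebra.commutes,
      mul_assoc]

namespace Matrix

variable {K ι : Type*} [Field K] [Fintype ι] [DecidableEq ι]

theorem spectrum_transpose (M : Matrix ι ι K) : spectrum K Mᵀ = spectrum K M := by
  ext z
  rw [mem_spectrum_iff_isRoot_charpoly, mem_spectrum_iff_isRoot_charpoly, charpoly_transpose]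

theorem eq_zero_of_mul_eq_mul_of_disjoint_spectrum [IsAlgClosed K] {B C X : Matrix ι ι K}
    (hBC : Disjoint (spectrum K B) (spectrum K C)) (h : B * X = X * C) : X = 0 := by
  nontriviality Matrix ι ι K
  have hunit : IsUnit (aeval C B.charpoly) := by
    by_contra hnu
    rw [← spectrum.zero_mem_iff K, spectrum.map_polynomial_aeval_of_nonempty C _
      (spectrum.nonempty_of_isAlgClosed_of_finiteDimensional K C)] at hnu
    obtain ⟨z, hzC, hz⟩ := hnu
    exact hBC.ne_of_mem (mem_spectrum_of_isRoot_charpoly hz) hzC rfl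
  rw [← hunit.mul_left_eq_zero, ← aeval_mul_eq_mul_aeval h, aeval_self_charpoly, zero_mul]

end Matrix

theorem IsHurwitz.eq_zero_of_sylvester {n : ℕ} {A₁ A₂ X : Matrix (Fin n) (Fin n) ℝ}
    (h₁ : IsHurwitz A₁) (h₂ : IsHurwitz A₂) (hX : A₁ᵀ * X + X * A₂ = 0) : X = 0 := by
  let f := (algebraMap ℝ ℂ).mapMatrix (m := Fin n)
  have hdisj : Disjoint (spectrum ℂ (f A₁)ᵀ) (spectrum ℂ (-f A₂)) := by
    rw [spectrum_transpose, ← spectrum.neg_eq, Set.disjoint_left]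
    intro z hz₁ hz₂
    have hre₁ := h₁ z hz₁
    have hre₂ := h₂ (-z) hz₂
    rw [Complex.neg_re] at hre₂
    linarith
  have hXc : (f A₁)ᵀ * f X = f X * -f A₂ := by
    rw [mul_neg, eq_neg_iff_add_eq_zero]
    have hXc := congrArg f hX
    rwa [map_add, map_mul, map_mul, map_zero, show f A₁ᵀ = (f A₁)ᵀ from transpose_map] at hXc
  exact map_injective (algebraMap ℝ ℂ).injective
    (eq_zero_of_mul_eq_mul_of_disjoint_spectrum hdisj hXc)

theorem sylvester_unique_solution_general {n : ℕ}
    (A₁ A₂ : Matrix (Fin n) (Fin n) ℝ)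
    (h₁ : IsHurwitz A₁) (h₂ : IsHurwitz A₂) (G : Matrix (Fin n) (Fin n) ℝ) :
    ∃! X : Matrix (Fin n) (Fin n) ℝ, A₁ᵀ * X + X * A₂ + G = 0 := by
  let L := LinearMap.mulLeft ℝ A₁ᵀ + LinearMap.mulRight ℝ A₂
  have hL : Function.Injective L := (injective_iff_map_eq_zero L).mpr fun _ ↦
    h₁.eq_zero_of_sylvester h₂
  obtain ⟨X, hX⟩ := LinearMap.injective_iff_surjective.mp hL (-G)
  refine ⟨X, add_eq_zero_iff_eq_neg.mpr hX, fun Y hY ↦ hL ?_⟩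
  exact (add_eq_zero_iff_eq_neg.mp hY).trans hX.symm

/-- if `A₁`, `A₂` are Hurwitz then for every `G` the Sylvester equation
`A₁ᵀ X + X A₂ + G = 0` has a unique solution `X`. -/
theorem sylvester_unique_solution {n : ℕ} (hn : 0 < n)
    (A₁ A₂ : Matrix (Fin n) (Fin n) ℝ)
    (h₁ : IsHurwitz A₁) (h₂ : IsHurwitz A₂) (G : Matrix (Fin n) (Fin n) ℝ) :
    ∃! X : Matrix (Fin n) (Fin n) ℝ, A₁ᵀ * X + X * A₂ + G = 0 :=
  sylvester_unique_solution_general A₁ A₂ h₁ h₂ G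
end

section
/- Let T, δ, K₀, λ > 0. Suppose P : [0,T] → (symmetric n×n real matrices) and a symmetric n×n real matrix P∞ satisfy, for all t ∈ [0,T]: ‖P(t) − P∞‖ ≤ K₀ e^{−λ(T−t)}, R + DᵀP(t)D ⪰ δI_m, and R + DᵀP∞D ⪰ δI_m. Define Θ_T(t) = −(R + DᵀP(t)D)⁻¹(BᵀP(t) + DᵀP(t)C + S) and Θ∞ = −(R + DᵀP∞D)⁻¹(BᵀP∞ + DᵀP∞C + S). Then there exists a constant K > 0, depending only on B, C, D, S, R, δ, K₀ and ‖P∞‖ but not on T, such that ‖Θ_T(t) − Θ∞‖ ≤ K e^{−λ(T−t)} for all t ∈ [0,T]. -/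
/-!
Both `R + DᵀPD` and `BᵀP + DᵀPC + S` are affine in `P`, and coercivity `A ⪰ δ I` gives
`δ|x| ≤ |Ax|` (Cauchy–Schwarz), which applied to the columns of `A⁻¹` bounds
`‖(R + DᵀPD)⁻¹‖ ≤ √m / δ` uniformly in `P`. With
`A⁻¹x - A'⁻¹x' = A⁻¹(x - x') + A⁻¹(A' - A)A'⁻¹x'` this yields `‖Θ(P) - Θ∞‖ ≤ c ‖P - P∞‖` for
every coercive `P`, where `c` depends only on the data, `δ` and `Θ∞`; the exponential bound
on `‖P(t) - P∞‖` then transfers to the gains.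
-/

open Matrix

/-- Frobenius norm of a real matrix. -/
noncomputable def frobNorm {k l : ℕ} (M : Matrix (Fin k) (Fin l) ℝ) : ℝ :=
  Real.sqrt (∑ i, ∑ j, (M i j) ^ 2)

attribute [local instance] Matrix.frobeniusNormedAddCommGroup

namespace Matrix

lemma inv_mul_sub_inv_mul {ι κ α : Type*} [Fintype ι] [DecidableEq ι] [CommRing α]
    {A A' : Matrix ι ι α} (hA : IsUnit A) (hA' : IsUnit A') (x x' : Matrix ι κ α) :
    A⁻¹ * x - A'⁻¹ * x' = A⁻¹ * (x - x') + A⁻¹ * (A' - A) * (A'⁻¹ * x') := by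
  have hAA : A⁻¹ * A = 1 := nonsing_inv_mul A ((isUnit_iff_isUnit_det A).1 hA)
  have hAA' : A' * A'⁻¹ = 1 := mul_nonsing_inv A' ((isUnit_iff_isUnit_det A').1 hA')
  have : A⁻¹ * (A' - A) * (A'⁻¹ * x') = A⁻¹ * x' - A'⁻¹ * x' := by
    rw [Matrix.mul_sub, Matrix.sub_mul, hAA, Matrix.one_mul, Matrix.mul_assoc A⁻¹,
      ← Matrix.mul_assoc A', hAA', Matrix.one_mul]
  rw [this, Matrix.mul_sub]
  abel

lemma frobenius_norm_eq_sqrt {κ ι : Type*} [Fintype κ] [Fintype ι] (M : Matrix κ ι ℝ) :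
    ‖M‖ = Real.sqrt (∑ i, ∑ j, M i j ^ 2) := by
  rw [frobenius_norm_def, Real.sqrt_eq_rpow]
  simp only [Real.norm_eq_abs, Real.rpow_two, sq_abs]

section Submultiplicative

variable {ι κ l o : Type*} [Fintype ι] [Fintype κ] [Fintype l] [Fintype o]

lemma frobenius_norm_mul_mul_le (A : Matrix ι κ ℝ) (B : Matrix κ l ℝ) (C : Matrix l o ℝ) :
    ‖A * B * C‖ ≤ ‖A‖ * ‖B‖ * ‖C‖ :=
  (frobenius_norm_mul _ _).trans (by gcongr; exact frobenius_norm_mul _ _)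

lemma frobenius_norm_inv_mul_sub_inv_mul_le [DecidableEq ι] {A A' : Matrix ι ι ℝ}
    (hA : IsUnit A) (hA' : IsUnit A') (x x' : Matrix ι κ ℝ) :
    ‖A⁻¹ * x - A'⁻¹ * x'‖ ≤ ‖A⁻¹‖ * (‖x - x'‖ + ‖A - A'‖ * ‖A'⁻¹ * x'‖) := by
  rw [inv_mul_sub_inv_mul hA hA', mul_add, norm_sub_rev A]
  refine (norm_add_le _ _).trans (add_le_add (frobenius_norm_mul _ _) ?_)
  exact (frobenius_norm_mul_mul_le _ _ _).trans_eq (mul_assoc _ _ _)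

end Submultiplicative

section Coercive

variable {ι : Type*} [DecidableEq ι] {A : Matrix ι ι ℝ} {δ : ℝ}

lemma posDef_of_posSemidef_sub_smul (hδ : 0 < δ) (h : (A - δ • (1 : Matrix ι ι ℝ)).PosSemidef) :
    A.PosDef := by
  simpa using PosDef.posSemidef_add h (PosDef.one.smul hδ)

variable [Fintype ι]

lemma mul_dotProduct_self_le_of_posSemidef_sub_smul
    (h : (A - δ • (1 : Matrix ι ι ℝ)).PosSemidef) (x : ι → ℝ) :
    δ * (x ⬝ᵥ x) ≤ x ⬝ᵥ (A *ᵥ x) := by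
  have := h.dotProduct_mulVec_nonneg x
  simp only [star_trivial, sub_mulVec, dotProduct_sub, smul_mulVec, one_mulVec,
    dotProduct_smul, smul_eq_mul] at this
  linarith

lemma sq_mul_dotProduct_self_le_of_posSemidef_sub_smul (hδ : 0 ≤ δ)
    (h : (A - δ • (1 : Matrix ι ι ℝ)).PosSemidef) (x : ι → ℝ) :
    δ ^ 2 * (x ⬝ᵥ x) ≤ (A *ᵥ x) ⬝ᵥ (A *ᵥ x) := by
  have hx : 0 ≤ x ⬝ᵥ x := Finset.sum_nonneg fun i _ => mul_self_nonneg (x i)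
  have hAx : 0 ≤ (A *ᵥ x) ⬝ᵥ (A *ᵥ x) := Finset.sum_nonneg fun i _ => mul_self_nonneg _
  have cauchySchwarz : (x ⬝ᵥ (A *ᵥ x)) ^ 2 ≤ (x ⬝ᵥ x) * ((A *ᵥ x) ⬝ᵥ (A *ᵥ x)) := by
    simpa only [dotProduct, sq] using Finset.sum_mul_sq_le_sq_mul_sq Finset.univ x (A *ᵥ x)
  have hcoer : (δ * (x ⬝ᵥ x)) ^ 2 ≤ (x ⬝ᵥ (A *ᵥ x)) ^ 2 :=
    pow_le_pow_left₀ (by positivity) (mul_dotProduct_self_le_of_posSemidef_sub_smul h x) 2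
  rcases hx.eq_or_lt with hx0 | hxpos
  · rw [← hx0, mul_zero]; exact hAx
  · nlinarith

lemma frobenius_norm_inv_le_of_posSemidef_sub_smul (hδ : 0 < δ)
    (h : (A - δ • (1 : Matrix ι ι ℝ)).PosSemidef) :
    ‖A⁻¹‖ ≤ Real.sqrt (Fintype.card ι) / δ := by
  have hAA : A * A⁻¹ = 1 := A.mul_nonsing_inv
    ((A.isUnit_iff_isUnit_det).1 (posDef_of_posSemidef_sub_smul hδ h).isUnit)
  have hcol (j : ι) : ∑ i, A⁻¹ i j ^ 2 ≤ (δ ^ 2)⁻¹ := by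
    have := sq_mul_dotProduct_self_le_of_posSemidef_sub_smul hδ.le h (A⁻¹ *ᵥ Pi.single j 1)
    rw [mulVec_mulVec, hAA, one_mulVec, mulVec_single_one] at this
    simp only [dotProduct_single, Pi.single_eq_same, mul_one] at this
    have hsum : ∑ i, A⁻¹ i j ^ 2 = A⁻¹.col j ⬝ᵥ A⁻¹.col j := by
      simp only [dotProduct, col_apply, sq]
    rw [hsum, ← one_div (δ ^ 2), le_div_iff₀ (by positivity)]
    linarith
  rw [frobenius_norm_eq_sqrt, Finset.sum_comm]
  calc Real.sqrt (∑ j, ∑ i, A⁻¹ i j ^ 2) ≤ Real.sqrt (∑ _j : ι, (δ ^ 2)⁻¹) :=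
        Real.sqrt_le_sqrt (Finset.sum_le_sum fun j _ => hcol j)
    _ = Real.sqrt (Fintype.card ι) / δ := by
        rw [Finset.sum_const, Finset.card_univ, nsmul_eq_mul, Real.sqrt_mul (Nat.cast_nonneg _),
          Real.sqrt_inv, Real.sqrt_sq hδ.le, div_eq_mul_inv]

end Coercive

end Matrix

lemma frobNorm_eq_norm {k l : ℕ} (M : Matrix (Fin k) (Fin l) ℝ) : frobNorm M = ‖M‖ :=
  (frobenius_norm_eq_sqrt M).symm

section FeedbackGain

variable {n m : ℕ} (B D : Matrix (Fin n) (Fin m) ℝ) (C : Matrix (Fin n) (Fin n) ℝ)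
  (S : Matrix (Fin m) (Fin n) ℝ) (R : Matrix (Fin m) (Fin m) ℝ)

/-- The gain `Θ` of the paper, as a function of the Riccati solution `P`. -/
noncomputable def feedbackGain (P : Matrix (Fin n) (Fin n) ℝ) : Matrix (Fin m) (Fin n) ℝ :=
  -((R + Dᵀ * P * D)⁻¹ * (Bᵀ * P + Dᵀ * P * C + S))

theorem norm_feedbackGain_sub_le {δ : ℝ} (hδ : 0 < δ) {P P' : Matrix (Fin n) (Fin n) ℝ}
    (hP : ((R + Dᵀ * P * D) - δ • (1 : Matrix (Fin m) (Fin m) ℝ)).PosSemidef)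
    (hP' : ((R + Dᵀ * P' * D) - δ • (1 : Matrix (Fin m) (Fin m) ℝ)).PosSemidef) :
    ‖feedbackGain B D C S R P - feedbackGain B D C S R P'‖ ≤
      Real.sqrt m / δ * (‖B‖ + ‖D‖ * ‖C‖ + ‖D‖ * ‖D‖ * ‖feedbackGain B D C S R P'‖) *
        ‖P - P'‖ := by
  have hdenom : ‖(R + Dᵀ * P * D) - (R + Dᵀ * P' * D)‖ ≤ ‖D‖ * ‖D‖ * ‖P - P'‖ := by
    have : (R + Dᵀ * P * D) - (R + Dᵀ * P' * D) = Dᵀ * (P - P') * D := by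
      simp only [Matrix.mul_sub, Matrix.sub_mul]; abel
    rw [this]
    calc ‖Dᵀ * (P - P') * D‖ ≤ ‖Dᵀ‖ * ‖P - P'‖ * ‖D‖ := frobenius_norm_mul_mul_le _ _ _
      _ = ‖D‖ * ‖D‖ * ‖P - P'‖ := by rw [frobenius_norm_transpose]; ring
  have hnum : ‖(Bᵀ * P + Dᵀ * P * C + S) - (Bᵀ * P' + Dᵀ * P' * C + S)‖ ≤
      (‖B‖ + ‖D‖ * ‖C‖) * ‖P - P'‖ := by
    have : (Bᵀ * P + Dᵀ * P * C + S) - (Bᵀ * P' + Dᵀ * P' * C + S) =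
        Bᵀ * (P - P') + Dᵀ * (P - P') * C := by
      simp only [Matrix.mul_sub, Matrix.sub_mul]; abel
    rw [this]
    calc ‖Bᵀ * (P - P') + Dᵀ * (P - P') * C‖
        ≤ ‖Bᵀ‖ * ‖P - P'‖ + ‖Dᵀ‖ * ‖P - P'‖ * ‖C‖ :=
          (norm_add_le _ _).trans (add_le_add (frobenius_norm_mul _ _)
            (frobenius_norm_mul_mul_le _ _ _))
      _ = (‖B‖ + ‖D‖ * ‖C‖) * ‖P - P'‖ := by
          rw [frobenius_norm_transpose, frobenius_norm_transpose]; ring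
  have hinv : ‖(R + Dᵀ * P * D)⁻¹‖ ≤ Real.sqrt m / δ := by
    simpa using frobenius_norm_inv_le_of_posSemidef_sub_smul hδ hP
  calc ‖feedbackGain B D C S R P - feedbackGain B D C S R P'‖
      = ‖(R + Dᵀ * P * D)⁻¹ * (Bᵀ * P + Dᵀ * P * C + S)
          - (R + Dᵀ * P' * D)⁻¹ * (Bᵀ * P' + Dᵀ * P' * C + S)‖ := by
        rw [feedbackGain, feedbackGain, neg_sub_neg, norm_sub_rev]
    _ ≤ ‖(R + Dᵀ * P * D)⁻¹‖ * (‖(Bᵀ * P + Dᵀ * P * C + S) - (Bᵀ * P' + Dᵀ * P' * C + S)‖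
          + ‖(R + Dᵀ * P * D) - (R + Dᵀ * P' * D)‖ * ‖feedbackGain B D C S R P'‖) := by
        rw [feedbackGain, norm_neg]
        exact frobenius_norm_inv_mul_sub_inv_mul_le
          (posDef_of_posSemidef_sub_smul hδ hP).isUnit
          (posDef_of_posSemidef_sub_smul hδ hP').isUnit _ _
    _ ≤ Real.sqrt m / δ * ((‖B‖ + ‖D‖ * ‖C‖) * ‖P - P'‖
          + ‖D‖ * ‖D‖ * ‖P - P'‖ * ‖feedbackGain B D C S R P'‖) := by gcongr
    _ = _ := by ring

end FeedbackGain

theorem feedback_gain_convergence_general {n m : ℕ}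
    (B D : Matrix (Fin n) (Fin m) ℝ) (C : Matrix (Fin n) (Fin n) ℝ)
    (S : Matrix (Fin m) (Fin n) ℝ) (R : Matrix (Fin m) (Fin m) ℝ)
    (δ K₀ lam : ℝ) (hδ : 0 < δ) (hK₀ : 0 < K₀)
    (Pinf : Matrix (Fin n) (Fin n) ℝ)
    (hRinf : ((R + Dᵀ * Pinf * D) - δ • (1 : Matrix (Fin m) (Fin m) ℝ)).PosSemidef) :
    ∃ K > (0:ℝ), ∀ T : ℝ, 0 < T → ∀ P : ℝ → Matrix (Fin n) (Fin n) ℝ,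
      (∀ t ∈ Set.Icc (0:ℝ) T, (P t).IsSymm) →
      (∀ t ∈ Set.Icc (0:ℝ) T, frobNorm (P t - Pinf) ≤ K₀ * Real.exp (-lam * (T - t))) →
      (∀ t ∈ Set.Icc (0:ℝ) T,
        ((R + Dᵀ * P t * D) - δ • (1 : Matrix (Fin m) (Fin m) ℝ)).PosSemidef) →
      ∀ t ∈ Set.Icc (0:ℝ) T,
        frobNorm (-((R + Dᵀ * P t * D)⁻¹ * (Bᵀ * P t + Dᵀ * P t * C + S))
            - -((R + Dᵀ * Pinf * D)⁻¹ * (Bᵀ * Pinf + Dᵀ * Pinf * C + S)))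
          ≤ K * Real.exp (-lam * (T - t)) := by
  set c := Real.sqrt m / δ * (‖B‖ + ‖D‖ * ‖C‖ + ‖D‖ * ‖D‖ * ‖feedbackGain B D C S R Pinf‖)
  refine ⟨c * K₀ + 1, by positivity, fun T _ P _ hconv hcoer t ht => ?_⟩
  have hexp := Real.exp_pos (-lam * (T - t))
  calc frobNorm (feedbackGain B D C S R (P t) - feedbackGain B D C S R Pinf)
      ≤ c * ‖P t - Pinf‖ := by
        rw [frobNorm_eq_norm]; exact norm_feedbackGain_sub_le B D C S R hδ (hcoer t ht) hRinf
    _ ≤ c * (K₀ * Real.exp (-lam * (T - t))) := by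
        gcongr; rw [← frobNorm_eq_norm]; exact hconv t ht
    _ ≤ (c * K₀ + 1) * Real.exp (-lam * (T - t)) := by nlinarith

/-- exponential convergence `‖P(t) - P∞‖ ≤ K₀ e^{-λ(T-t)}` together with
the uniform coercivity `R + DᵀP(t)D ⪰ δ I`, `R + DᵀP∞D ⪰ δ I` implies exponential
convergence of the feedback gains `Θ_T(t)` to `Θ∞`, with a constant independent of
`T`. -/
theorem feedback_gain_convergence {n m : ℕ} (hn : 0 < n) (hm : 0 < m)
    (B D : Matrix (Fin n) (Fin m) ℝ) (C : Matrix (Fin n) (Fin n) ℝ)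
    (S : Matrix (Fin m) (Fin n) ℝ) (R : Matrix (Fin m) (Fin m) ℝ) (hR : R.IsSymm)
    (δ K₀ lam : ℝ) (hδ : 0 < δ) (hK₀ : 0 < K₀) (hlam : 0 < lam)
    (Pinf : Matrix (Fin n) (Fin n) ℝ) (hPinf : Pinf.IsSymm)
    (hRinf : ((R + Dᵀ * Pinf * D) - δ • (1 : Matrix (Fin m) (Fin m) ℝ)).PosSemidef) :
    ∃ K > (0:ℝ), ∀ T : ℝ, 0 < T → ∀ P : ℝ → Matrix (Fin n) (Fin n) ℝ,
      (∀ t ∈ Set.Icc (0:ℝ) T, (P t).IsSymm) →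
      (∀ t ∈ Set.Icc (0:ℝ) T, frobNorm (P t - Pinf) ≤ K₀ * Real.exp (-lam * (T - t))) →
      (∀ t ∈ Set.Icc (0:ℝ) T,
        ((R + Dᵀ * P t * D) - δ • (1 : Matrix (Fin m) (Fin m) ℝ)).PosSemidef) →
      ∀ t ∈ Set.Icc (0:ℝ) T,
        frobNorm (-((R + Dᵀ * P t * D)⁻¹ * (Bᵀ * P t + Dᵀ * P t * C + S))
            - -((R + Dᵀ * Pinf * D)⁻¹ * (Bᵀ * Pinf + Dᵀ * Pinf * C + S)))
          ≤ K * Real.exp (-lam * (T - t)) :=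
  feedback_gain_convergence_general B D C S R δ K₀ lam hδ hK₀ Pinf hRinf
end

section
/- Let T > 0, let M be an n×n real matrix, and let K₀, K₁, K₂, λ₁, λ₂ > 0 with λ₁ ≠ λ₂ and ‖exp(tMᵀ)‖ ≤ K₂ e^{−λ₂ t} for all t ≥ 0. Suppose q : [0,T] → ℝⁿ is differentiable with q′(t) = −Mᵀ q(t) − h(t) for all t ∈ [0,T], where h : [0,T] → ℝⁿ is continuous with |h(t)| ≤ K₁ e^{−λ₁(T−t)}, and |q(T)| ≤ K₀. Then there exists a constant K > 0 depending only on K₀, K₁, K₂, λ₁, λ₂ (and not on T) such that |q(t)| ≤ K e^{−λ(T−t)} for all t ∈ [0,T], where λ = min{λ₁, λ₂}. -/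
open Matrix

/-- Euclidean norm of a vector in `ℝⁿ`. -/
noncomputable def eNorm {k : ℕ} (v : Fin k → ℝ) : ℝ :=
  Real.sqrt (∑ i, (v i) ^ 2)

/-- Matrix exponential of a real square matrix. -/
noncomputable def matExp {k : ℕ} (M : Matrix (Fin k) (Fin k) ℝ) : Matrix (Fin k) (Fin k) ℝ :=
  NormedSpace.exp M

/-!
Duhamel's formula for the backward equation reads
`q t = exp((T - t)Mᵀ) q(T) + ∫ s in t..T, exp((s - t)Mᵀ) h(s)`.
The first term is at most `K₂ K₀ e^{-λ₂(T-t)}`. The integrand is at most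
`K₁ K₂ e^{-λ₂(s-t)} e^{-λ₁(T-s)}`, whose integral is the divided difference
`(e^{-λ₂(T-t)} - e^{-λ₁(T-t)}) / (λ₁ - λ₂) ≤ e^{-λ(T-t)} / |λ₁ - λ₂|`;
this is bounded independently of `T` precisely because `λ₁ ≠ λ₂`.
-/

open Set MeasureTheory

lemma eNorm_eq_norm_toLp {k : ℕ} (v : Fin k → ℝ) :
    eNorm v = ‖(WithLp.toLp 2 v : EuclideanSpace ℝ (Fin k))‖ := by
  simp [eNorm, EuclideanSpace.norm_eq]

lemma eNorm_add_le {k : ℕ} (v w : Fin k → ℝ) : eNorm (v + w) ≤ eNorm v + eNorm w := by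
  simpa only [eNorm_eq_norm_toLp, WithLp.toLp_add] using norm_add_le _ _

lemma eNorm_integral_le_of_eNorm_le {k : ℕ} {f : ℝ → Fin k → ℝ} {g : ℝ → ℝ} {a b : ℝ}
    (hab : a ≤ b) (hfg : ∀ s ∈ Ioc a b, eNorm (f s) ≤ g s)
    (hg : IntervalIntegrable g volume a b) :
    eNorm (∫ s in a..b, f s) ≤ ∫ s in a..b, g s := by
  have hcomm : WithLp.toLp 2 (∫ s in a..b, f s) = ∫ s in a..b, WithLp.toLp 2 (f s) := by
    simp only [intervalIntegral.integral_of_le hab]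
    exact ((EuclideanSpace.equiv (Fin k) ℝ).symm.integral_comp_comm f).symm
  rw [eNorm_eq_norm_toLp, hcomm]
  refine intervalIntegral.norm_integral_le_of_norm_le hab ?_ hg
  exact Filter.Eventually.of_forall fun s hs => (eNorm_eq_norm_toLp (f s)).symm.trans_le (hfg s hs)

lemma eNorm_mulVec_le {k l : ℕ} (M : Matrix (Fin k) (Fin l) ℝ) (v : Fin l → ℝ) :
    eNorm (M *ᵥ v) ≤ frobNorm M * eNorm v := by
  rw [eNorm, eNorm, frobNorm, ← Real.sqrt_mul (x := ∑ i, ∑ j, M i j ^ 2) (by positivity),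
    Finset.sum_mul]
  refine Real.sqrt_le_sqrt (Finset.sum_le_sum fun i _ => ?_)
  simpa only [mulVec, dotProduct] using Finset.sum_mul_sq_le_sq_mul_sq Finset.univ (M i) v

lemma eNorm_mulVec_le_of_frobNorm_le {k l : ℕ} {M : Matrix (Fin k) (Fin l) ℝ} {c : ℝ}
    (hM : frobNorm M ≤ c) (v : Fin l → ℝ) : eNorm (M *ᵥ v) ≤ c * eNorm v :=
  (eNorm_mulVec_le M v).trans (mul_le_mul_of_nonneg_right hM (Real.sqrt_nonneg _))

section Derivatives

/- `HasDerivAt` for matrix-valued maps only involves the product topology; some norm compatible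
with it is needed to use the normed-space calculus (bilinear maps, `exp`). -/
attribute [local instance] Matrix.linftyOpNormedAddCommGroup Matrix.linftyOpNormedSpace
  Matrix.linftyOpNormedRing Matrix.linftyOpNormedAlgebra

lemma HasDerivAt.matrix_mulVec {k l : ℕ} {M : ℝ → Matrix (Fin k) (Fin l) ℝ}
    {v : ℝ → Fin l → ℝ} {M' : Matrix (Fin k) (Fin l) ℝ} {v' : Fin l → ℝ} {s : ℝ}
    (hM : HasDerivAt M M' s) (hv : HasDerivAt v v' s) :
    HasDerivAt (fun u => M u *ᵥ v u) (M s *ᵥ v' + M' *ᵥ v s) s := by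
  exact (mulVecBilin ℝ ℝ).toContinuousBilinearMap.hasDerivAt_of_bilinear
    (fun _ => hM) (fun _ => hv)

lemma hasDerivAt_matExp_smul_mulVec {k : ℕ} (A : Matrix (Fin k) (Fin k) ℝ) {q : ℝ → Fin k → ℝ}
    {q' : Fin k → ℝ} (t s : ℝ) (hq : HasDerivAt q q' s) :
    HasDerivAt (fun u => matExp ((u - t) • A) *ᵥ q u)
      (matExp ((s - t) • A) *ᵥ (A *ᵥ q s + q')) s := by
  have hexp : HasDerivAt (fun u => matExp ((u - t) • A)) (matExp ((s - t) • A) * A) s :=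
    (hasDerivAt_exp_smul_const A (s - t)).comp_sub_const s t
  convert hexp.matrix_mulVec hq using 1
  rw [mulVec_add, mulVec_mulVec, add_comm]

lemma continuous_matExp_smul {k : ℕ} (A : Matrix (Fin k) (Fin k) ℝ) :
    Continuous fun u : ℝ => matExp (u • A) :=
  continuous_iff_continuousAt.2 fun s => (hasDerivAt_exp_smul_const A s).continuousAt

end Derivatives

theorem eq_matExp_mulVec_add_integral {k : ℕ} (A : Matrix (Fin k) (Fin k) ℝ)
    {q h : ℝ → Fin k → ℝ} {t T : ℝ} (htT : t ≤ T) (hh : ContinuousOn h (Icc t T))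
    (hq : ∀ s ∈ Icc t T, HasDerivAt q (-(A *ᵥ q s) - h s) s) :
    q t = matExp ((T - t) • A) *ᵥ q T + ∫ s in t..T, matExp ((s - t) • A) *ᵥ h s := by
  have hderiv : ∀ s ∈ uIcc t T, HasDerivAt (fun u => matExp ((u - t) • A) *ᵥ q u)
      (-(matExp ((s - t) • A) *ᵥ h s)) s := fun s hs => by
    convert hasDerivAt_matExp_smul_mulVec A t s (hq s (uIcc_of_le htT ▸ hs)) using 1
    rw [show A *ᵥ q s + (-(A *ᵥ q s) - h s) = -h s by abel, mulVec_neg]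
  have hcont : ContinuousOn (fun s => matExp ((s - t) • A) *ᵥ h s) (uIcc t T) := by
    rw [uIcc_of_le htT]
    exact (continuous_fst.matrix_mulVec continuous_snd).comp_continuousOn
      (((continuous_matExp_smul A).comp (continuous_sub_right t)).continuousOn.prodMk hh)
  have hftc := intervalIntegral.integral_eq_sub_of_hasDerivAt hderiv hcont.neg.intervalIntegrable
  have hE0 : matExp ((t - t) • A) = 1 := by simp [matExp]
  rw [intervalIntegral.integral_neg, hE0, one_mulVec, neg_eq_iff_eq_neg, neg_sub,
    eq_sub_iff_add_eq'] at hftc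
  exact hftc.symm

lemma integral_exp_mul_exp {a b t T : ℝ} (hab : a ≠ b) :
    ∫ s in t..T, Real.exp (-b * (s - t)) * Real.exp (-a * (T - s)) =
      (Real.exp (-b * (T - t)) - Real.exp (-a * (T - t))) / (a - b) := by
  have hab' : a - b ≠ 0 := sub_ne_zero.2 hab
  have hderiv : ∀ s ∈ uIcc t T,
      HasDerivAt (fun u => Real.exp (-b * (u - t)) * Real.exp (-a * (T - u)) / (a - b))
        (Real.exp (-b * (s - t)) * Real.exp (-a * (T - s))) s := fun s _ => by
    have hl : HasDerivAt (fun u => -b * (u - t)) (-b) s := by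
      simpa using ((hasDerivAt_id s).sub_const t).const_mul (-b)
    have hr : HasDerivAt (fun u => -a * (T - u)) a s := by
      simpa using ((hasDerivAt_id s).const_sub T).const_mul (-a)
    refine ((hl.exp.fun_mul hr.exp).div_const (a - b)).congr_deriv ?_
    field_simp
    ring
  have hint : IntervalIntegrable (fun s => Real.exp (-b * (s - t)) * Real.exp (-a * (T - s)))
      volume t T := (by fun_prop : Continuous _).intervalIntegrable t T
  rw [intervalIntegral.integral_eq_sub_of_hasDerivAt hderiv hint]
  simp only [sub_self, mul_zero, Real.exp_zero, mul_one, one_mul]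
  ring

lemma exp_sub_exp_div_sub_le {a b x : ℝ} (hab : a ≠ b) :
    (Real.exp (-b * x) - Real.exp (-a * x)) / (a - b) ≤ Real.exp (-min a b * x) / |a - b| := by
  rcases hab.lt_or_gt with hlt | hgt
  · rw [min_eq_left hlt.le, abs_of_neg (sub_neg.2 hlt), ← neg_div_neg_eq, neg_sub, neg_sub]
    gcongr
    linarith [Real.exp_pos (-b * x)]
  · rw [min_eq_right hgt.le, abs_of_pos (sub_pos.2 hgt)]
    gcongr
    linarith [Real.exp_pos (-a * x)]

lemma eNorm_integral_matExp_mulVec_le {k : ℕ} {A : Matrix (Fin k) (Fin k) ℝ}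
    {h : ℝ → Fin k → ℝ} {C₁ C₂ a b t T : ℝ} (hC₂ : 0 ≤ C₂) (htT : t ≤ T) (hab : a ≠ b)
    (hA : ∀ x : ℝ, 0 ≤ x → frobNorm (matExp (x • A)) ≤ C₂ * Real.exp (-b * x))
    (hh : ∀ s ∈ Icc t T, eNorm (h s) ≤ C₁ * Real.exp (-a * (T - s))) :
    eNorm (∫ s in t..T, matExp ((s - t) • A) *ᵥ h s) ≤
      C₂ * C₁ * ((Real.exp (-b * (T - t)) - Real.exp (-a * (T - t))) / (a - b)) := by
  rw [← integral_exp_mul_exp hab, ← intervalIntegral.integral_const_mul]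
  refine eNorm_integral_le_of_eNorm_le htT (fun s hs => ?_)
    (Continuous.intervalIntegrable (by fun_prop) t T)
  have hs' : s ∈ Icc t T := Ioc_subset_Icc_self hs
  calc _ ≤ C₂ * Real.exp (-b * (s - t)) * eNorm (h s) :=
        eNorm_mulVec_le_of_frobNorm_le (hA _ (sub_nonneg.2 hs'.1)) _
    _ ≤ C₂ * Real.exp (-b * (s - t)) * (C₁ * Real.exp (-a * (T - s))) := by
        gcongr; exact hh s hs'
    _ = _ := by ring

theorem backward_ode_estimate_general {n : ℕ}
    (K₀ K₁ K₂ lam₁ lam₂ : ℝ)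
    (hK₀ : 0 < K₀) (hK₁ : 0 < K₁) (hK₂ : 0 < K₂)
    (hne : lam₁ ≠ lam₂) :
    ∃ K > (0:ℝ), ∀ T : ℝ, 0 < T → ∀ M : Matrix (Fin n) (Fin n) ℝ,
      (∀ t : ℝ, 0 ≤ t → frobNorm (matExp (t • Mᵀ)) ≤ K₂ * Real.exp (-lam₂ * t)) →
      ∀ q h : ℝ → Fin n → ℝ,
        ContinuousOn h (Set.Icc 0 T) →
        (∀ t ∈ Set.Icc (0:ℝ) T, HasDerivAt q (-(Mᵀ.mulVec (q t)) - h t) t) →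
        (∀ t ∈ Set.Icc (0:ℝ) T, eNorm (h t) ≤ K₁ * Real.exp (-lam₁ * (T - t))) →
        eNorm (q T) ≤ K₀ →
        ∀ t ∈ Set.Icc (0:ℝ) T,
          eNorm (q t) ≤ K * Real.exp (-(min lam₁ lam₂) * (T - t)) := by
  refine ⟨K₂ * (K₀ + K₁ / |lam₁ - lam₂|), by positivity, ?_⟩
  intro T _ M hM q h hh hq hhT hqT t ⟨ht0, htT⟩
  have hsub : Icc t T ⊆ Icc 0 T := Icc_subset_Icc_left ht0
  have hforcing := eNorm_integral_matExp_mulVec_le hK₂.le htT hne hM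
    fun s hs => hhT s (hsub hs)
  have hTt : 0 ≤ T - t := sub_nonneg.2 htT
  rw [eq_matExp_mulVec_add_integral Mᵀ htT (hh.mono hsub) fun s hs => hq s (hsub hs)]
  calc _ ≤ K₂ * Real.exp (-lam₂ * (T - t)) * K₀ + K₂ * K₁ *
        ((Real.exp (-lam₂ * (T - t)) - Real.exp (-lam₁ * (T - t))) / (lam₁ - lam₂)) :=
        (eNorm_add_le _ _).trans (add_le_add
          ((eNorm_mulVec_le_of_frobNorm_le (hM _ hTt) _).trans (by gcongr)) hforcing)
    _ ≤ K₂ * Real.exp (-min lam₁ lam₂ * (T - t)) * K₀ + K₂ * K₁ *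
        (Real.exp (-min lam₁ lam₂ * (T - t)) / |lam₁ - lam₂|) := by
        gcongr ?_ + K₂ * K₁ * ?_
        · gcongr
          exact min_le_right _ _
        · exact exp_sub_exp_div_sub_le hne
    _ = _ := by ring

/-- backward linear ODE estimate.  If `‖exp(tMᵀ)‖ ≤ K₂ e^{-λ₂ t}`,
`q' = -Mᵀ q - h` on `[0, T]` with `|h(t)| ≤ K₁ e^{-λ₁(T-t)}` and `|q(T)| ≤ K₀`, then
`|q(t)| ≤ K e^{-λ(T-t)}` with `λ = min{λ₁, λ₂}` and `K` independent of `T`. -/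
theorem backward_ode_estimate {n : ℕ} (hn : 0 < n)
    (K₀ K₁ K₂ lam₁ lam₂ : ℝ)
    (hK₀ : 0 < K₀) (hK₁ : 0 < K₁) (hK₂ : 0 < K₂)
    (hlam₁ : 0 < lam₁) (hlam₂ : 0 < lam₂) (hne : lam₁ ≠ lam₂) :
    ∃ K > (0:ℝ), ∀ T : ℝ, 0 < T → ∀ M : Matrix (Fin n) (Fin n) ℝ,
      (∀ t : ℝ, 0 ≤ t → frobNorm (matExp (t • Mᵀ)) ≤ K₂ * Real.exp (-lam₂ * t)) →
      ∀ q h : ℝ → Fin n → ℝ,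
        ContinuousOn h (Set.Icc 0 T) →
        (∀ t ∈ Set.Icc (0:ℝ) T, HasDerivAt q (-(Mᵀ.mulVec (q t)) - h t) t) →
        (∀ t ∈ Set.Icc (0:ℝ) T, eNorm (h t) ≤ K₁ * Real.exp (-lam₁ * (T - t))) →
        eNorm (q T) ≤ K₀ →
        ∀ t ∈ Set.Icc (0:ℝ) T,
          eNorm (q t) ≤ K * Real.exp (-(min lam₁ lam₂) * (T - t)) :=
  backward_ode_estimate_general K₀ K₁ K₂ lam₁ lam₂ hK₀ hK₁ hK₂ hne
end

section
/- Let T, K, λ > 0 and let φ : [0,T] → ℝ be continuous and nonnegative, satisfying φ(t) ≤ K(e^{−λt} + e^{−λ(T−t)}) + K ∫₀ᵗ e^{−λ(T + t − 2s)} φ(s) ds for all t ∈ [0,T]. Then there exists a constant K′ > 0, depending only on K and λ (and not on T), such that φ(t) ≤ K′ (e^{−λt} + e^{−λ(T−t)}) for all t ∈ [0,T]. -/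
/-!
Put `F t = ∫₀ᵗ e^{2λs} φ s`. Multiplying the hypothesis by `e^{2λt}` and using
`e^{-λt} + e^{-λ(T-t)} ≤ 2` gives the linear differential inequality
`F' ≤ 2K e^{2λt} + K e^{λ(t-T)} F`. The rate `K e^{λ(t-T)}` has primitive `(K/λ) e^{λ(t-T)}`,
which is at most `K/λ` on `[0, T]` whatever `T` is, so Grönwall's inequality gives
`F t ≤ (K/λ) e^{K/λ} e^{2λt}`, and the kernel term `K e^{-λ(T+t)} F t` is at most
`(K²/λ) e^{K/λ} e^{-λ(T-t)}`.
-/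

open Set Real MeasureTheory intervalIntegral

theorem integral_exp_mul {c : ℝ} (hc : c ≠ 0) (a b : ℝ) :
    ∫ x in a..b, exp (c * x) = (exp (c * b) - exp (c * a)) / c := by
  rw [integral_comp_mul_left (fun x => exp x) hc, integral_exp, smul_eq_mul, inv_mul_eq_div]

theorem hasDerivAt_integral_of_continuousOn_Icc {E : Type*} [NormedAddCommGroup E]
    [NormedSpace ℝ E] [CompleteSpace E] {f : ℝ → E} {a b x : ℝ}
    (hf : ContinuousOn f (Icc a b)) (hx : x ∈ Ioo a b) :
    HasDerivAt (fun y => ∫ s in a..y, f s) (f x) x :=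
  integral_hasDerivAt_right
    ((hf.mono (Icc_subset_Icc_right hx.2.le)).intervalIntegrable_of_Icc hx.1.le)
    ((hf.mono Ioo_subset_Icc_self).stronglyMeasurableAtFilter isOpen_Ioo x hx)
    (hf.continuousAt (Icc_mem_nhds hx.1 hx.2))

section Gronwall

variable {f f' g r R : ℝ → ℝ} {a b : ℝ}

theorem mul_exp_neg_sub_le_integral_of_deriv_le (hab : a ≤ b)
    (hf_cont : ContinuousOn f (Icc a b)) (hf : ∀ x ∈ Ioo a b, HasDerivAt f (f' x) x)
    (hR : ∀ x ∈ Icc a b, HasDerivAt R (r x) x)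
    (hg : IntegrableOn (fun x => g x * exp (-R x)) (Icc a b))
    (hf' : ∀ x ∈ Ioo a b, f' x ≤ g x + r x * f x) :
    f b * exp (-R b) - f a * exp (-R a) ≤ ∫ x in a..b, g x * exp (-R x) := by
  have hR_cont : ContinuousOn R (Icc a b) :=
    fun x hx => (hR x hx).continuousAt.continuousWithinAt
  refine sub_le_integral_of_hasDeriv_right_of_le (g := fun x => f x * exp (-R x))
    (g' := fun x => f' x * exp (-R x) + f x * (exp (-R x) * -r x)) hab
    (hf_cont.mul hR_cont.neg.rexp) (fun x hx => ?_) hg (fun x hx => ?_)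
  · exact ((hf x hx).mul (hR x (Ioo_subset_Icc_self hx)).neg.exp).hasDerivWithinAt
  · have := mul_le_mul_of_nonneg_right (hf' x hx) (exp_pos (-R x)).le
    linarith

theorem le_exp_sub_mul_add_integral_of_deriv_le (hab : a ≤ b)
    (hf_cont : ContinuousOn f (Icc a b)) (hf : ∀ x ∈ Ioo a b, HasDerivAt f (f' x) x)
    (hR : ∀ x ∈ Icc a b, HasDerivAt R (r x) x) (hr : ∀ x ∈ Ioo a b, 0 ≤ r x)
    (hg : IntegrableOn g (Icc a b)) (hg_nonneg : ∀ x ∈ Icc a b, 0 ≤ g x)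
    (hf' : ∀ x ∈ Ioo a b, f' x ≤ g x + r x * f x) :
    f b ≤ exp (R b - R a) * (f a + ∫ x in a..b, g x) := by
  have hR_cont : ContinuousOn R (Icc a b) :=
    fun x hx => (hR x hx).continuousAt.continuousWithinAt
  have hR_mono : MonotoneOn R (Icc a b) :=
    monotoneOn_of_hasDerivWithinAt_nonneg (convex_Icc a b) hR_cont
      (fun x hx => (hR x (interior_subset hx)).hasDerivWithinAt)
      (fun x hx => hr x (by rwa [interior_Icc] at hx))
  have hgR := hg.mul_continuousOn hR_cont.neg.rexp isCompact_Icc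
  have h_factor := mul_exp_neg_sub_le_integral_of_deriv_le hab hf_cont hf hR hgR hf'
  have h_source : ∫ x in a..b, g x * exp (-R x) ≤ exp (-R a) * ∫ x in a..b, g x := by
    rw [← intervalIntegral.integral_const_mul]
    refine integral_mono_on hab
      ((intervalIntegrable_iff_integrableOn_Icc_of_le hab).mpr hgR)
      (((intervalIntegrable_iff_integrableOn_Icc_of_le hab).mpr hg).const_mul _) fun x hx => ?_
    rw [mul_comm]
    gcongr
    exacts [hg_nonneg x hx, hR_mono ⟨le_rfl, hab⟩ hx hx.1]
  calc f b = exp (R b) * (f b * exp (-R b)) := by rw [mul_left_comm, ← exp_add]; simp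
    _ ≤ exp (R b) * (exp (-R a) * (f a + ∫ x in a..b, g x)) :=
      mul_le_mul_of_nonneg_left (by linarith) (exp_pos _).le
    _ = exp (R b - R a) * (f a + ∫ x in a..b, g x) := by
      rw [← mul_assoc, ← exp_add, sub_eq_add_neg]

end Gronwall

theorem exp_neg_mul_add_exp_neg_mul_sub_le_two {lam T t : ℝ} (hlam : 0 ≤ lam)
    (ht : t ∈ Icc 0 T) : exp (-lam * t) + exp (-lam * (T - t)) ≤ 2 := by
  have h₁ : exp (-lam * t) ≤ 1 := exp_le_one_iff.mpr (by nlinarith [ht.1])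
  have h₂ : exp (-lam * (T - t)) ≤ 1 := exp_le_one_iff.mpr (by nlinarith [ht.2])
  linarith

theorem integral_kernel_eq_exp_mul_integral (lam T t : ℝ) (φ : ℝ → ℝ) :
    ∫ s in 0..t, exp (-lam * (T + t - 2 * s)) * φ s
      = exp (-lam * (T + t)) * ∫ s in 0..t, exp (2 * lam * s) * φ s := by
  rw [← intervalIntegral.integral_const_mul]
  congr 1 with s
  rw [← mul_assoc, ← exp_add]
  ring_nf

section Kernel

variable {K lam T t : ℝ} {φ : ℝ → ℝ}

theorem integral_exp_two_mul_mul_le (hK : 0 ≤ K) (hlam : 0 < lam)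
    (hφc : ContinuousOn φ (Icc 0 T))
    (hφ : ∀ t ∈ Icc 0 T,
      φ t ≤ 2 * K + K * (exp (-lam * (T + t)) * ∫ s in 0..t, exp (2 * lam * s) * φ s))
    (ht : t ∈ Icc 0 T) :
    ∫ s in 0..t, exp (2 * lam * s) * φ s ≤ K / lam * exp (K / lam) * exp (2 * lam * t) := by
  set F := fun x => ∫ s in 0..x, exp (2 * lam * s) * φ s
  set R := fun x => K / lam * exp (lam * (x - T))
  have hintegrand : ContinuousOn (fun s => exp (2 * lam * s) * φ s) (Icc 0 t) :=
    (by fun_prop : ContinuousOn _ (Icc 0 T)).mono (Icc_subset_Icc_right ht.2)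
  have hF_cont : ContinuousOn F (Icc 0 t) := by
    have := continuousOn_primitive_interval (μ := volume) (a := 0) (b := t)
      (by rw [uIcc_of_le ht.1]; exact hintegrand.integrableOn_Icc)
    rwa [uIcc_of_le ht.1] at this
  have hR : ∀ x, HasDerivAt R (K * exp (lam * (x - T))) x := fun x =>
    ((((hasDerivAt_id x).sub_const T).const_mul lam).exp.const_mul (K / lam)).congr_deriv
      (by simp; field_simp)
  have hF' : ∀ x ∈ Ioo 0 t,
      exp (2 * lam * x) * φ x ≤ 2 * K * exp (2 * lam * x) + K * exp (lam * (x - T)) * F x := by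
    intro x hx
    have hexp : exp (2 * lam * x) * exp (-lam * (T + x)) = exp (lam * (x - T)) := by
      rw [← exp_add]; ring_nf
    calc exp (2 * lam * x) * φ x
        ≤ exp (2 * lam * x) * (2 * K + K * (exp (-lam * (T + x)) * F x)) :=
          mul_le_mul_of_nonneg_left (hφ x ⟨hx.1.le, hx.2.le.trans ht.2⟩) (exp_pos _).le
      _ = _ := by rw [← hexp]; ring
  have gronwall := le_exp_sub_mul_add_integral_of_deriv_le ht.1 hF_cont
    (fun x hx => hasDerivAt_integral_of_continuousOn_Icc hintegrand hx) (fun x _ => hR x)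
    (fun x _ => by positivity) (Continuous.integrableOn_Icc (by fun_prop))
    (fun x _ => by positivity) hF'
  have h_source : ∫ x in 0..t, 2 * K * exp (2 * lam * x) ≤ K / lam * exp (2 * lam * t) := by
    rw [intervalIntegral.integral_const_mul, integral_exp_mul (by positivity), mul_zero, exp_zero]
    field_simp
    linarith
  have h_rate : R t - R 0 ≤ K / lam := by
    have : exp (lam * (t - T)) ≤ 1 := exp_le_one_iff.mpr (by nlinarith [ht.2])
    have : 0 ≤ R 0 := by positivity
    nlinarith [div_nonneg hK hlam.le]
  calc F t ≤ exp (R t - R 0) * (F 0 + ∫ x in 0..t, 2 * K * exp (2 * lam * x)) := gronwall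
    _ ≤ exp (K / lam) * (K / lam * exp (2 * lam * t)) := by
      rw [show F 0 = 0 from integral_same, zero_add]
      exact mul_le_mul (exp_le_exp.mpr h_rate) h_source
        (integral_nonneg ht.1 fun x _ => by positivity) (exp_pos _).le
    _ = K / lam * exp (K / lam) * exp (2 * lam * t) := by ring

theorem integral_kernel_le (hK : 0 ≤ K) (hlam : 0 < lam) (hφc : ContinuousOn φ (Icc 0 T))
    (hφ : ∀ t ∈ Icc 0 T, φ t ≤ K * (exp (-lam * t) + exp (-lam * (T - t)))
      + K * ∫ s in 0..t, exp (-lam * (T + t - 2 * s)) * φ s)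
    (ht : t ∈ Icc 0 T) :
    ∫ s in 0..t, exp (-lam * (T + t - 2 * s)) * φ s
      ≤ K / lam * exp (K / lam) * exp (-lam * (T - t)) := by
  simp only [integral_kernel_eq_exp_mul_integral] at hφ ⊢
  have hφ' : ∀ t ∈ Icc 0 T,
      φ t ≤ 2 * K + K * (exp (-lam * (T + t)) * ∫ s in 0..t, exp (2 * lam * s) * φ s) :=
    fun t ht => (hφ t ht).trans (add_le_add_left (by
      linarith [mul_le_mul_of_nonneg_left (exp_neg_mul_add_exp_neg_mul_sub_le_two hlam.le ht) hK])
      _)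
  have hexp : exp (-lam * (T + t)) * exp (2 * lam * t) = exp (-lam * (T - t)) := by
    rw [← exp_add]; ring_nf
  calc exp (-lam * (T + t)) * ∫ s in 0..t, exp (2 * lam * s) * φ s
      ≤ exp (-lam * (T + t)) * (K / lam * exp (K / lam) * exp (2 * lam * t)) :=
        mul_le_mul_of_nonneg_left (integral_exp_two_mul_mul_le hK hlam hφc hφ' ht)
          (exp_pos _).le
    _ = K / lam * exp (K / lam) * exp (-lam * (T - t)) := by rw [← hexp]; ring

end Kernel

/-- Grönwall-type estimate with exponentially decaying kernel
`e^{-λ(T + t - 2s)}`: any continuous nonnegative `φ` on `[0, T]` satisfying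
`φ(t) ≤ K(e^{-λt} + e^{-λ(T-t)}) + K ∫₀ᵗ e^{-λ(T + t - 2s)} φ(s) ds` obeys
`φ(t) ≤ K'(e^{-λt} + e^{-λ(T-t)})` with `K'` depending only on `K`, `λ`. -/
theorem gronwall_kernel_estimate (K lam : ℝ) (hK : 0 < K) (hlam : 0 < lam) :
    ∃ K' > (0:ℝ), ∀ T : ℝ, 0 < T → ∀ φ : ℝ → ℝ,
      ContinuousOn φ (Set.Icc 0 T) →
      (∀ t ∈ Set.Icc (0:ℝ) T, 0 ≤ φ t) →
      (∀ t ∈ Set.Icc (0:ℝ) T,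
        φ t ≤ K * (Real.exp (-lam * t) + Real.exp (-lam * (T - t)))
          + K * ∫ s in (0:ℝ)..t, Real.exp (-lam * (T + t - 2 * s)) * φ s) →
      ∀ t ∈ Set.Icc (0:ℝ) T,
        φ t ≤ K' * (Real.exp (-lam * t) + Real.exp (-lam * (T - t))) := by
  refine ⟨K + K * (K / lam * exp (K / lam)), by positivity, fun T _ φ hφc _ hφ t ht => ?_⟩
  have h_kernel := integral_kernel_le hK.le hlam hφc hφ ht
  have h_left : 0 ≤ K / lam * exp (K / lam) * exp (-lam * t) := by positivity
  calc φ t ≤ K * (exp (-lam * t) + exp (-lam * (T - t)))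
        + K * ∫ s in 0..t, exp (-lam * (T + t - 2 * s)) * φ s := hφ t ht
    _ ≤ K * (exp (-lam * t) + exp (-lam * (T - t)))
        + K * (K / lam * exp (K / lam) * exp (-lam * (T - t))) := by gcongr
    _ ≤ (K + K * (K / lam * exp (K / lam))) * (exp (-lam * t) + exp (-lam * (T - t))) := by
      nlinarith
end

section
/- Let T, K, K₁, β, λ > 0 and define g(t) = K₁(−β/2 + K e^{−λ(T−t)}) for t ∈ [0,T]. Then: (i) for all 0 ≤ s ≤ t ≤ T, exp(∫ₛᵗ g(r) dr) ≤ exp(K₁K/λ) · exp(−K₁β(t − s)/2); and (ii) there exist constants K′ > 0 and λ′ > 0, depending only on K, K₁, β, λ (and not on T), such that ∫₀ᵗ exp(∫ₛᵗ g(r) dr) · K(e^{−λs} + e^{−λ(T−s)}) ds ≤ K′(e^{−λ′t} + e^{−λ′(T−t)}) for all t ∈ [0,T]. -/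
/-!
With `a = K₁β/2` the integral of `g` is explicit,
`∫ₛᵗ g = -a(t - s) + (K₁K/λ)(e^{-λ(T-t)} - e^{-λ(T-s)})`, and the bracket is at most `1` when
`t ≤ T`; this is (i). For (ii) let `m = min a λ` and `C = e^{K₁K/λ}`. By (i) the integrand is at
most `CK e^{-a(t-s)}(e^{-λs} + e^{-λ(T-s)})`. The first product is at most `e^{-mt}`, whose
integral `t e^{-mt}` is at most `(2/m) e^{-mt/2}`; the second is at most `e^{-m(T-t)} e^{-a(t-s)}`,
and `∫₀ᵗ e^{-a(t-s)} ds ≤ 1/a ≤ 2/m`. So `K' = 2CK/m` and `λ' = m/2` work, independently of `T`.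
-/

/-- The function `g(t) = K₁(-β/2 + K e^{-λ(T-t)})`. -/
noncomputable def gFun (K K₁ β lam T t : ℝ) : ℝ :=
  K₁ * (-β / 2 + K * Real.exp (-lam * (T - t)))

open Real intervalIntegral

lemma continuous_gFun (K K₁ β lam T : ℝ) : Continuous (gFun K K₁ β lam T) := by
  unfold gFun
  fun_prop

lemma integral_gFun (K K₁ β T s t : ℝ) {lam : ℝ} (hlam : lam ≠ 0) :
    ∫ r in s..t, gFun K K₁ β lam T r =
      -(K₁ * β * (t - s) / 2) + K₁ * K / lam * (exp (-lam * (T - t)) - exp (-lam * (T - s))) := by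
  have hderiv : ∀ r ∈ Set.uIcc s t, HasDerivAt
      (fun r => -(K₁ * β / 2 * r) + K₁ * K / lam * exp (-lam * (T - r)))
      (gFun K K₁ β lam T r) r := by
    intro r _
    have hexp := (((hasDerivAt_id r).const_sub T).const_mul (-lam)).exp.const_mul (K₁ * K / lam)
    refine (((hasDerivAt_id r).const_mul (K₁ * β / 2)).neg.add hexp).congr_deriv ?_
    simp only [gFun, id]
    field_simp
  rw [integral_eq_sub_of_hasDerivAt hderiv ((continuous_gFun ..).intervalIntegrable s t)]
  ring

lemma integral_gFun_le {K K₁ lam T t : ℝ} (β s : ℝ) (hK : 0 ≤ K) (hK₁ : 0 ≤ K₁) (hlam : 0 < lam)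
    (htT : t ≤ T) :
    ∫ r in s..t, gFun K K₁ β lam T r ≤ K₁ * K / lam + -(K₁ * β * (t - s) / 2) := by
  have hle_one : exp (-lam * (T - t)) ≤ 1 := exp_le_one_iff.mpr (by nlinarith)
  have hpos : 0 < exp (-lam * (T - s)) := exp_pos _
  have hcoef : 0 ≤ K₁ * K / lam := by positivity
  rw [integral_gFun K K₁ β T s t hlam.ne']
  nlinarith

lemma exp_integral_gFun_le {K K₁ lam T t : ℝ} (β s : ℝ) (hK : 0 ≤ K) (hK₁ : 0 ≤ K₁)
    (hlam : 0 < lam) (htT : t ≤ T) :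
    exp (∫ r in s..t, gFun K K₁ β lam T r) ≤
      exp (K₁ * K / lam) * exp (-(K₁ * β * (t - s) / 2)) := by
  rw [← exp_add]
  exact exp_le_exp.mpr (integral_gFun_le β s hK hK₁ hlam htT)

lemma exp_integral_gFun_mul_le {K K₁ lam T t X : ℝ} (β s : ℝ) (hK : 0 ≤ K) (hK₁ : 0 ≤ K₁)
    (hlam : 0 < lam) (htT : t ≤ T) (hX : 0 ≤ X) :
    exp (∫ r in s..t, gFun K K₁ β lam T r) * (K * X) ≤
      exp (K₁ * K / lam) * K * (exp (-(K₁ * β / 2 * (t - s))) * X) := by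
  calc exp (∫ r in s..t, gFun K K₁ β lam T r) * (K * X)
      ≤ exp (K₁ * K / lam) * exp (-(K₁ * β * (t - s) / 2)) * (K * X) := by
        gcongr
        exact exp_integral_gFun_le β s hK hK₁ hlam htT
    _ = exp (K₁ * K / lam) * K * (exp (-(K₁ * β / 2 * (t - s))) * X) := by ring_nf

lemma mul_exp_neg_mul_le {c : ℝ} (hc : 0 < c) (t : ℝ) :
    t * exp (-(c * t)) ≤ 2 / c * exp (-(c / 2) * t) := by
  have hhalf : c / 2 * t * exp (-(c / 2 * t)) ≤ 1 :=
    (mul_exp_neg_le_exp_neg_one _).trans (exp_le_one_iff.mpr (by norm_num))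
  have hsplit : exp (-(c * t)) = exp (-(c / 2 * t)) * exp (-(c / 2) * t) := by
    rw [← exp_add]
    ring_nf
  rw [hsplit, ← mul_assoc]
  gcongr
  rw [le_div_iff₀ hc]
  linarith

lemma integral_exp_neg_mul_sub_le {a : ℝ} (ha : 0 < a) (t : ℝ) :
    ∫ s in (0 : ℝ)..t, exp (-(a * (t - s))) ≤ 1 / a := by
  have hshift : (fun s => exp (-(a * (t - s)))) = fun s => exp (a * s - a * t) := by
    ext s
    ring_nf
  rw [hshift, integral_comp_mul_sub (f := exp) ha.ne', integral_exp, smul_eq_mul, sub_self,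
    exp_zero, one_div]
  exact mul_le_of_le_one_right (inv_nonneg.mpr ha.le) (by linarith [exp_pos (a * 0 - a * t)])

lemma exp_decay_mul_sum_le {a lam m s t T : ℝ} (hma : m ≤ a) (hml : m ≤ lam) (hlam : 0 ≤ lam)
    (hs : 0 ≤ s) (hst : s ≤ t) (htT : t ≤ T) :
    exp (-(a * (t - s))) * (exp (-lam * s) + exp (-lam * (T - s))) ≤
      exp (-(m * t)) + exp (-(m * (T - t))) * exp (-(a * (t - s))) := by
  rw [mul_add, mul_comm (exp (-(m * (T - t)))), ← exp_add, ← exp_add, ← exp_add]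
  gcongr <;> nlinarith

lemma integral_exp_decay_mul_sum_le {a lam t T : ℝ} (ha : 0 < a) (hlam : 0 < lam) (ht : 0 ≤ t)
    (htT : t ≤ T) :
    ∫ s in (0 : ℝ)..t, exp (-(a * (t - s))) * (exp (-lam * s) + exp (-lam * (T - s))) ≤
      2 / min a lam * (exp (-(min a lam / 2) * t) + exp (-(min a lam / 2) * (T - t))) := by
  set m := min a lam
  have hm : 0 < m := lt_min ha hlam
  have hcoef : 1 / a ≤ 2 / m := by
    rw [div_le_div_iff₀ ha hm]
    linarith [min_le_left a lam]
  have htail : exp (-(m * (T - t))) ≤ exp (-(m / 2) * (T - t)) :=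
    exp_le_exp.mpr (by nlinarith)
  calc ∫ s in (0 : ℝ)..t, exp (-(a * (t - s))) * (exp (-lam * s) + exp (-lam * (T - s)))
      ≤ ∫ s in (0 : ℝ)..t, (exp (-(m * t)) + exp (-(m * (T - t))) * exp (-(a * (t - s)))) :=
        integral_mono_on ht (Continuous.intervalIntegrable (by fun_prop) _ _)
          (Continuous.intervalIntegrable (by fun_prop) _ _) fun s hs =>
          exp_decay_mul_sum_le (min_le_left a lam) (min_le_right a lam) hlam.le hs.1 hs.2 htT
    _ = t * exp (-(m * t)) + exp (-(m * (T - t))) * ∫ s in (0 : ℝ)..t, exp (-(a * (t - s))) := by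
        rw [integral_add intervalIntegrable_const (Continuous.intervalIntegrable (by fun_prop) _ _),
          integral_const, integral_const_mul, smul_eq_mul, sub_zero]
    _ ≤ 2 / m * exp (-(m / 2) * t) + exp (-(m / 2) * (T - t)) * (2 / m) := by
        refine add_le_add (mul_exp_neg_mul_le hm t) (mul_le_mul htail ?_ ?_ (exp_pos _).le)
        · exact (integral_exp_neg_mul_sub_le ha t).trans hcoef
        · exact integral_nonneg ht fun s _ => (exp_pos _).le
    _ = 2 / m * (exp (-(m / 2) * t) + exp (-(m / 2) * (T - t))) := by ring

/-- (i) `exp(∫ₛᵗ g) ≤ exp(K₁K/λ)·exp(-K₁β(t-s)/2)` for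
`0 ≤ s ≤ t ≤ T`; (ii) there are `K', λ' > 0` independent of `T` such that
`∫₀ᵗ exp(∫ₛᵗ g)·K(e^{-λs} + e^{-λ(T-s)}) ds ≤ K'(e^{-λ't} + e^{-λ'(T-t)})` on
`[0, T]`. -/
theorem gFun_integral_estimates (K K₁ β lam : ℝ)
    (hK : 0 < K) (hK₁ : 0 < K₁) (hβ : 0 < β) (hlam : 0 < lam) :
    (∀ T : ℝ, 0 < T → ∀ s t : ℝ, 0 ≤ s → s ≤ t → t ≤ T →
      Real.exp (∫ r in s..t, gFun K K₁ β lam T r)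
        ≤ Real.exp (K₁ * K / lam) * Real.exp (-(K₁ * β * (t - s) / 2))) ∧
    ∃ K' > (0:ℝ), ∃ lam' > (0:ℝ), ∀ T : ℝ, 0 < T → ∀ t ∈ Set.Icc (0:ℝ) T,
      (∫ s in (0:ℝ)..t, Real.exp (∫ r in s..t, gFun K K₁ β lam T r)
          * (K * (Real.exp (-lam * s) + Real.exp (-lam * (T - s)))))
        ≤ K' * (Real.exp (-lam' * t) + Real.exp (-lam' * (T - t))) := by
  refine ⟨fun T _ s t _ _ htT => exp_integral_gFun_le β s hK.le hK₁.le hlam htT, ?_⟩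
  set a := K₁ * β / 2
  have ha : 0 < a := by positivity
  set C := exp (K₁ * K / lam)
  refine ⟨C * K * (2 / min a lam), by positivity, min a lam / 2, by positivity, ?_⟩
  rintro T - t ⟨ht, htT⟩
  have hcont : Continuous fun s => ∫ r in s..t, gFun K K₁ β lam T r := by
    simp_rw [integral_gFun K K₁ β T _ t hlam.ne']
    fun_prop
  calc ∫ s in (0 : ℝ)..t, exp (∫ r in s..t, gFun K K₁ β lam T r)
          * (K * (exp (-lam * s) + exp (-lam * (T - s))))
      ≤ ∫ s in (0 : ℝ)..t,
          C * K * (exp (-(a * (t - s))) * (exp (-lam * s) + exp (-lam * (T - s)))) :=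
        integral_mono_on ht (Continuous.intervalIntegrable (by fun_prop) _ _)
          (Continuous.intervalIntegrable (by fun_prop) _ _) fun s _ =>
          exp_integral_gFun_mul_le β s hK.le hK₁.le hlam htT (by positivity)
    _ = C * K * ∫ s in (0 : ℝ)..t,
          exp (-(a * (t - s))) * (exp (-lam * s) + exp (-lam * (T - s))) :=
        integral_const_mul _ _
    _ ≤ C * K * (2 / min a lam
          * (exp (-(min a lam / 2) * t) + exp (-(min a lam / 2) * (T - t)))) := by
        gcongr
        exact integral_exp_decay_mul_sum_le ha hlam ht htT
    _ = C * K * (2 / min a lam)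
          * (exp (-(min a lam / 2) * t) + exp (-(min a lam / 2) * (T - t))) := by ring
end
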